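/- arXiv:2410.22690 — 5 statements merged into one kernel-verified Lean document; each statement's English description precedes it below -/
import Mathlib

section
/- Theorem (advantages as rewards): For every transition matrix P, all policies π and π̄, every reward function r : S × A → ℝ, every discount factor γ ∈ (0,1), and every state s ∈ S: V(π,P,r,γ)(s) − V(π,P,r̃,γ)(s) = V(π̄,P,r,γ)(s), where r̃ : S × A → ℝ is defined by r̃(s,a) = Δ(π̄,P,r,γ)(s,a). -/
open Filter Finset Topology

noncomputable section

variable {S A : Type} [Fintype S] [DecidableEq S] [Fintype A] [Nonempty S] [Nonempty A]

/-- A policy assigns to each state a probability distribution over actions. -/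
def IsPolicy (π : S → A → ℝ) : Prop :=
  (∀ s a, 0 ≤ π s a) ∧ ∀ s, ∑ a, π s a = 1

/-- A transition matrix assigns to each action and state a probability distribution
over next states. -/
def IsTransition (P : A → S → S → ℝ) : Prop :=
  (∀ a s s', 0 ≤ P a s s') ∧ ∀ a s, ∑ s', P a s s' = 1

/-- The state-transition matrix induced by a policy and a transition matrix. -/
def Mmat (π : S → A → ℝ) (P : A → S → S → ℝ) : Matrix S S ℝ :=
  Matrix.of fun s s' => ∑ a, π s a * P a s s'

/-- Expected one-step reward under policy `π`. -/
def rpi (π : S → A → ℝ) (r : S × A → ℝ) (s : S) : ℝ := ∑ a, π s a * r (s, a)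

/-- Discounted value function. -/
def Vval (π : S → A → ℝ) (P : A → S → S → ℝ) (r : S × A → ℝ) (γ : ℝ) (s : S) : ℝ :=
  ∑' t : ℕ, γ ^ t * ((Mmat π P ^ t).mulVec (rpi π r)) s

/-- State-action value function. -/
def Qval (π : S → A → ℝ) (P : A → S → S → ℝ) (r : S × A → ℝ) (γ : ℝ) (s : S) (a : A) : ℝ :=
  r (s, a) + γ * ∑ s', P a s s' * Vval π P r γ s'

/-- Advantage function. -/
def Adv (π : S → A → ℝ) (P : A → S → S → ℝ) (r : S × A → ℝ) (γ : ℝ) (s : S) (a : A) : ℝ :=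
  Qval π P r γ s a - Vval π P r γ s

/-!
Averaged over `π`, the advantage of `πbar` is the reward `r` shaped by the potential
`V = Vval πbar P r γ`: its expectation under `π` is `rπ + γ • M *ᵥ V - V`, where
`M = Mmat π P`.
Along the chain `M` the discounted shaping terms `γ^(t+1) M^(t+1) V - γ^t M^t V` telescope to
`-V`, so the value of the advantage reward is `Vval π P r γ - V`.
-/

namespace Matrix

variable {n : Type*} [Fintype n] [DecidableEq n]

theorem norm_mulVec_le_of_mem_rowStochastic {M : Matrix n n ℝ} (hM : M ∈ rowStochastic ℝ n)
    (v : n → ℝ) : ‖M *ᵥ v‖ ≤ ‖v‖ := by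
  refine (pi_norm_le_iff_of_nonneg (norm_nonneg v)).2 fun i => ?_
  calc ‖(M *ᵥ v) i‖ = |∑ j, M i j * v j| := rfl
    _ ≤ ∑ j, |M i j * v j| := abs_sum_le_sum_abs _ _
    _ ≤ ∑ j, M i j * ‖v‖ := by
      gcongr with j
      rw [abs_mul, abs_of_nonneg (nonneg_of_mem_rowStochastic hM)]
      gcongr
      · exact nonneg_of_mem_rowStochastic hM
      · exact norm_le_pi_norm v j
    _ = ‖v‖ := by rw [← sum_mul, sum_row_of_mem_rowStochastic hM, one_mul]

theorem summable_geometric_mul_pow_mulVec {M : Matrix n n ℝ} (hM : M ∈ rowStochastic ℝ n)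
    {γ : ℝ} (hγ : |γ| < 1) (v : n → ℝ) (i : n) :
    Summable fun t : ℕ => γ ^ t * (M ^ t *ᵥ v) i := by
  refine .of_norm_bounded ((summable_geometric_of_lt_one (abs_nonneg γ) hγ).mul_right ‖v‖)
    fun t => ?_
  rw [norm_mul, norm_pow]
  exact mul_le_mul_of_nonneg_left ((norm_le_pi_norm _ i).trans
    (norm_mulVec_le_of_mem_rowStochastic (pow_mem hM t) v)) (pow_nonneg (norm_nonneg γ) t)

theorem tsum_geometric_mul_pow_mulVec_add_telescope {M : Matrix n n ℝ}
    (hM : M ∈ rowStochastic ℝ n) {γ : ℝ} (hγ : |γ| < 1) (u w : n → ℝ) (i : n) :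
    ∑' t : ℕ, γ ^ t * (M ^ t *ᵥ (u + γ • M *ᵥ w - w)) i
      = ∑' t : ℕ, γ ^ t * (M ^ t *ᵥ u) i - w i := by
  set g : ℕ → ℝ := fun t => γ ^ t * (M ^ t *ᵥ w) i
  have hg : Summable g := summable_geometric_mul_pow_mulVec hM hγ w i
  have hterm : ∀ t : ℕ, γ ^ t * (M ^ t *ᵥ (u + γ • M *ᵥ w - w)) i
      = γ ^ t * (M ^ t *ᵥ u) i + (g (t + 1) - g t) := by
    intro t
    simp only [g, mulVec_sub, mulVec_add, mulVec_smul, mulVec_mulVec, Pi.add_apply,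
      Pi.sub_apply, Pi.smul_apply, smul_eq_mul]
    rw [← pow_succ M t]
    ring
  rw [tsum_congr hterm, (summable_geometric_mul_pow_mulVec hM hγ u i).tsum_add
    (((summable_nat_add_iff 1).2 hg).sub hg), ((summable_nat_add_iff 1).2 hg).tsum_sub hg,
    hg.tsum_eq_zero_add]
  simp only [g, pow_zero, one_mul, one_mulVec]
  ring

end Matrix

section

variable {S A : Type} [Fintype S] [Fintype A]

open Matrix

theorem Mmat_mem_rowStochastic [DecidableEq S] {π : S → A → ℝ} {P : A → S → S → ℝ}
    (hπ : IsPolicy π) (hP : IsTransition P) : Mmat π P ∈ rowStochastic ℝ S := by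
  refine mem_rowStochastic_iff_sum.2
    ⟨fun s s' => sum_nonneg fun a _ => mul_nonneg (hπ.1 s a) (hP.1 a s s'), fun s => ?_⟩
  simp only [Mmat, of_apply]
  rw [sum_comm]
  simp only [← mul_sum, hP.2, mul_one, hπ.2]

theorem Mmat_mulVec_apply (π : S → A → ℝ) (P : A → S → S → ℝ) (w : S → ℝ)
    (s : S) : (Mmat π P *ᵥ w) s = ∑ a, π s a * ∑ s', P a s s' * w s' := by
  simp only [mulVec, dotProduct, Mmat, of_apply, sum_mul, mul_sum, mul_assoc]
  exact sum_comm

theorem rpi_add_potential_shaping {π : S → A → ℝ} (hπ : ∀ s, ∑ a, π s a = 1)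
    (P : A → S → S → ℝ) (r : S × A → ℝ) (γ : ℝ) (w : S → ℝ) :
    rpi π (fun p => r p + γ * ∑ s', P p.2 p.1 s' * w s' - w p.1)
      = rpi π r + γ • Mmat π P *ᵥ w - w := by
  funext s
  have hw : w s = ∑ a, π s a * w s := by rw [← sum_mul, hπ s, one_mul]
  simp only [rpi, Pi.add_apply, Pi.sub_apply, Pi.smul_apply, smul_eq_mul,
    Mmat_mulVec_apply]
  conv_rhs => rw [hw, mul_sum, ← sum_add_distrib, ← sum_sub_distrib]
  exact sum_congr rfl fun a _ => by ring

end

theorem advantages_as_rewards_general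
    (P : A → S → S → ℝ) (π πbar : S → A → ℝ)
    (hP : IsTransition P) (hπ : IsPolicy π)
    (r : S × A → ℝ) (γ : ℝ) (hγ : γ ∈ Set.Ioo (0 : ℝ) 1) (s : S) :
    Vval π P r γ s - Vval π P (fun p => Adv πbar P r γ p.1 p.2) γ s
      = Vval πbar P r γ s := by
  have hγ' : |γ| < 1 := abs_lt.2 ⟨by linarith [hγ.1], hγ.2⟩
  have key := Matrix.tsum_geometric_mul_pow_mulVec_add_telescope
    (Mmat_mem_rowStochastic hπ hP) hγ' (rpi π r) (Vval πbar P r γ) s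
  rw [← rpi_add_potential_shaping hπ.2] at key
  change Vval π P (fun p => Adv πbar P r γ p.1 p.2) γ s
    = Vval π P r γ s - Vval πbar P r γ s at key
  linarith

/-- **Advantages as rewards.** For every transition matrix `P`, all policies `π` and `π̄`,
every reward function `r`, every discount `γ ∈ (0,1)`, and every state `s`:
`V(π,P,r,γ)(s) − V(π,P,r̃,γ)(s) = V(π̄,P,r,γ)(s)` where `r̃ = Δ(π̄,P,r,γ)`. -/
theorem advantages_as_rewards
    (P : A → S → S → ℝ) (π πbar : S → A → ℝ)
    (hP : IsTransition P) (hπ : IsPolicy π) (hπbar : IsPolicy πbar)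
    (r : S × A → ℝ) (γ : ℝ) (hγ : γ ∈ Set.Ioo (0 : ℝ) 1) (s : S) :
    Vval π P r γ s - Vval π P (fun p => Adv πbar P r γ p.1 p.2) γ s
      = Vval πbar P r γ s :=
  advantages_as_rewards_general P π πbar hP hπ r γ hγ s
end
end

section
/- Corollary (rewards with matching advantage functions induce the same value differences): Let P be a transition matrix, π̄ a policy, γ ∈ (0,1) a discount factor, and let r, r' : S × A → ℝ be reward functions such that Δ(π̄,P,r,γ)(s,a) = Δ(π̄,P,r',γ)(s,a) for all s ∈ S and a ∈ A. Then for all policies π, π' and every state s ∈ S: V(π,P,r,γ)(s) − V(π',P,r,γ)(s) = V(π,P,r',γ)(s) − V(π',P,r',γ)(s). -/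
/-!
The advantage determines the reward up to potential-based shaping:
`r (s, a) = Δ(π̄, r) (s, a) + f s - γ ∑ s', P a s s' * f s'` with potential `f = V(π̄, r)`.
Hence matching advantages make `r - r'` a shaping reward whose potential is
`f = V(π̄, r) - V(π̄, r')`. The value is linear in the reward, and under a shaping reward the
discounted sum `∑ γ^t M^t (f - γ M f)` telescopes to `f` for every policy. So
`V(π, r) - V(π, r') = f` does not depend on `π`.
-/

open Filter Finset Topology

open Matrix

theorem Summable.tsum_sub_succ {G : Type*} [AddCommGroup G] [TopologicalSpace G]
    [IsTopologicalAddGroup G] [T2Space G] {a : ℕ → G} (ha : Summable a) :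
    ∑' t, (a t - a (t + 1)) = a 0 := by
  rw [ha.tsum_sub ((summable_nat_add_iff 1).mpr ha), ha.tsum_eq_zero_add, add_sub_cancel_right]

section RowStochastic

variable {n : Type*} [Fintype n] [DecidableEq n] {M : Matrix n n ℝ}

theorem abs_mulVec_apply_le_norm_of_mem_rowStochastic (hM : M ∈ rowStochastic ℝ n)
    (v : n → ℝ) (i : n) : |(M *ᵥ v) i| ≤ ‖v‖ :=
  calc |(M *ᵥ v) i| = |∑ j, M i j * v j| := rfl
    _ ≤ ∑ j, M i j * ‖v‖ := by
      refine (abs_sum_le_sum_abs _ _).trans (sum_le_sum fun j _ => ?_)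
      rw [abs_mul, abs_of_nonneg (nonneg_of_mem_rowStochastic hM)]
      exact mul_le_mul_of_nonneg_left (norm_le_pi_norm v j) (nonneg_of_mem_rowStochastic hM)
    _ = ‖v‖ := by rw [← sum_mul, sum_row_of_mem_rowStochastic hM, one_mul]

variable {γ : ℝ}

theorem summable_discounted_pow_mulVec (hM : M ∈ rowStochastic ℝ n) (hγ₀ : 0 ≤ γ) (hγ₁ : γ < 1)
    (v : n → ℝ) (i : n) : Summable fun t : ℕ => γ ^ t * (M ^ t *ᵥ v) i := by
  refine Summable.of_norm_bounded ((summable_geometric_of_lt_one hγ₀ hγ₁).mul_right ‖v‖)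
    fun t => ?_
  rw [Real.norm_eq_abs, abs_mul, abs_pow, abs_of_nonneg hγ₀]
  exact mul_le_mul_of_nonneg_left
    (abs_mulVec_apply_le_norm_of_mem_rowStochastic (pow_mem hM t) v i) (pow_nonneg hγ₀ t)

theorem tsum_discounted_pow_mulVec_sub (hM : M ∈ rowStochastic ℝ n) (hγ₀ : 0 ≤ γ) (hγ₁ : γ < 1)
    (v w : n → ℝ) (i : n) :
    ∑' t : ℕ, γ ^ t * (M ^ t *ᵥ (v - w)) i =
      ∑' t : ℕ, γ ^ t * (M ^ t *ᵥ v) i - ∑' t : ℕ, γ ^ t * (M ^ t *ᵥ w) i := by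
  rw [← (summable_discounted_pow_mulVec hM hγ₀ hγ₁ v i).tsum_sub
    (summable_discounted_pow_mulVec hM hγ₀ hγ₁ w i)]
  simp only [mulVec_sub, Pi.sub_apply, mul_sub]

theorem tsum_discounted_pow_mulVec_potential (hM : M ∈ rowStochastic ℝ n) (hγ₀ : 0 ≤ γ)
    (hγ₁ : γ < 1) (f : n → ℝ) (i : n) :
    ∑' t : ℕ, γ ^ t * (M ^ t *ᵥ (f - γ • M *ᵥ f)) i = f i := by
  have hterm : ∀ t : ℕ, γ ^ t * (M ^ t *ᵥ (f - γ • M *ᵥ f)) i =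
      γ ^ t * (M ^ t *ᵥ f) i - γ ^ (t + 1) * (M ^ (t + 1) *ᵥ f) i := fun t => by
    rw [mulVec_sub, mulVec_smul, mulVec_mulVec, ← pow_succ]
    simp only [Pi.sub_apply, Pi.smul_apply, smul_eq_mul]
    ring
  simp_rw [hterm]
  rw [(summable_discounted_pow_mulVec hM hγ₀ hγ₁ f i).tsum_sub_succ, pow_zero, pow_zero,
    one_mulVec, one_mul]

end RowStochastic

section MDP

variable {S A : Type} {P : A → S → S → ℝ} {π : S → A → ℝ} {γ : ℝ}

theorem rpi_sub [Fintype A] (r r' : S × A → ℝ) : rpi π (r - r') = rpi π r - rpi π r' := by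
  ext s
  simp only [rpi, Pi.sub_apply, mul_sub, sum_sub_distrib]

variable [Fintype S]

noncomputable def potentialShaping (P : A → S → S → ℝ) (γ : ℝ) (f : S → ℝ) (x : S × A) : ℝ :=
  f x.1 - γ * ∑ s', P x.2 x.1 s' * f s'

theorem potentialShaping_sub (f g : S → ℝ) :
    potentialShaping P γ (f - g) = potentialShaping P γ f - potentialShaping P γ g := by
  ext x
  simp only [potentialShaping, Pi.sub_apply, mul_sub, sum_sub_distrib]
  ring

variable [Fintype A]

theorem rpi_potentialShaping (hπ : IsPolicy π) (f : S → ℝ) :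
    rpi π (potentialShaping P γ f) = f - γ • Mmat π P *ᵥ f := by
  ext s
  have hM : (Mmat π P *ᵥ f) s = ∑ a, π s a * ∑ s', P a s s' * f s' := by
    simp only [Mmat, mulVec, dotProduct, of_apply, sum_mul, mul_sum, mul_assoc]
    exact sum_comm
  simp only [rpi, potentialShaping, Pi.sub_apply, Pi.smul_apply, smul_eq_mul, hM, mul_sub,
    sum_sub_distrib, ← sum_mul, hπ.2 s, one_mul, mul_sum, mul_left_comm]

variable [DecidableEq S]

theorem eq_adv_add_potentialShaping (r : S × A → ℝ) (x : S × A) :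
    r x = Adv π P r γ x.1 x.2 + potentialShaping P γ (Vval π P r γ) x := by
  simp only [Adv, Qval, potentialShaping]
  ring

theorem mmat_mem_rowStochastic (hπ : IsPolicy π) (hP : IsTransition P) :
    Mmat π P ∈ rowStochastic ℝ S := by
  refine mem_rowStochastic_iff_sum.mpr
    ⟨fun s s' => sum_nonneg fun a _ => mul_nonneg (hπ.1 s a) (hP.1 a s s'), fun s => ?_⟩
  simp only [Mmat, of_apply]
  rw [sum_comm]
  simp only [← mul_sum, hP.2, mul_one, hπ.2 s]

theorem vval_sub (hπ : IsPolicy π) (hP : IsTransition P) (hγ₀ : 0 ≤ γ) (hγ₁ : γ < 1)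
    (r r' : S × A → ℝ) :
    Vval π P (r - r') γ = Vval π P r γ - Vval π P r' γ := by
  ext s
  simp only [Vval, rpi_sub, Pi.sub_apply]
  exact tsum_discounted_pow_mulVec_sub (mmat_mem_rowStochastic hπ hP) hγ₀ hγ₁ _ _ s

theorem vval_potentialShaping (hπ : IsPolicy π) (hP : IsTransition P) (hγ₀ : 0 ≤ γ)
    (hγ₁ : γ < 1) (f : S → ℝ) : Vval π P (potentialShaping P γ f) γ = f := by
  ext s
  rw [Vval, rpi_potentialShaping hπ]
  exact tsum_discounted_pow_mulVec_potential (mmat_mem_rowStochastic hπ hP) hγ₀ hγ₁ f s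

end MDP

variable {S A : Type} [Fintype S] [DecidableEq S] [Fintype A] [Nonempty S] [Nonempty A]

theorem matching_advantages_same_value_differences_general
    (P : A → S → S → ℝ) (πbar : S → A → ℝ)
    (hP : IsTransition P)
    (γ : ℝ) (hγ : γ ∈ Set.Ioo (0 : ℝ) 1)
    (r r' : S × A → ℝ)
    (hΔ : ∀ s a, Adv πbar P r γ s a = Adv πbar P r' γ s a)
    (π π' : S → A → ℝ) (hπ : IsPolicy π) (hπ' : IsPolicy π') (s : S) :
    Vval π P r γ s - Vval π' P r γ s = Vval π P r' γ s - Vval π' P r' γ s := by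
  set f := Vval πbar P r γ - Vval πbar P r' γ
  have hshaping : r - r' = potentialShaping P γ f := by
    ext x
    rw [potentialShaping_sub, Pi.sub_apply, Pi.sub_apply,
      eq_adv_add_potentialShaping (π := πbar) r, eq_adv_add_potentialShaping (π := πbar) r', hΔ]
    ring
  have hgap : ∀ ρ, IsPolicy ρ → Vval ρ P r γ - Vval ρ P r' γ = f := fun ρ hρ => by
    rw [← vval_sub hρ hP hγ.1.le hγ.2, hshaping, vval_potentialShaping hρ hP hγ.1.le hγ.2]
  have h := congrFun ((hgap π hπ).trans (hgap π' hπ').symm) s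
  simp only [Pi.sub_apply] at h
  linarith

/-- **Rewards with matching advantage functions induce the same value differences.** -/
theorem matching_advantages_same_value_differences
    (P : A → S → S → ℝ) (πbar : S → A → ℝ)
    (hP : IsTransition P) (hπbar : IsPolicy πbar)
    (γ : ℝ) (hγ : γ ∈ Set.Ioo (0 : ℝ) 1)
    (r r' : S × A → ℝ)
    (hΔ : ∀ s a, Adv πbar P r γ s a = Adv πbar P r' γ s a)
    (π π' : S → A → ℝ) (hπ : IsPolicy π) (hπ' : IsPolicy π') (s : S) :
    Vval π P r γ s - Vval π' P r γ s = Vval π P r' γ s - Vval π' P r' γ s :=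
  matching_advantages_same_value_differences_general P πbar hP γ hγ r r' hΔ π π' hπ hπ' s
end

section
/- Cesàro convergence of stochastic matrix powers (underlying the well-definedness of relative state frequencies for Markov lotteries): Let S be a nonempty finite type and let M : S → S → ℝ be a row-stochastic matrix (M(s,s') ≥ 0 and ∑_{s'} M(s,s') = 1 for every s). Then for all s, s' ∈ S, the Cesàro averages (1/T) ∑_{t=0}^{T−1} (M^t)(s,s') converge to a limit as T → ∞. -/
open Filter Finset Topology

noncomputable section

/-- **Cesàro convergence of stochastic matrix powers.** If `M` is a row-stochastic matrix
on a nonempty finite state space, then for all states `s, s'` the Cesàro averages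
`(1/T) ∑_{t<T} (M^t)(s,s')` converge as `T → ∞`. -/
theorem cesaro_convergence_of_stochastic_matrix_powers
    {S : Type} [Fintype S] [DecidableEq S] [Nonempty S]
    (M : Matrix S S ℝ)
    (hnn : ∀ s s', 0 ≤ M s s') (hrow : ∀ s, ∑ s', M s s' = 1)
    (s s' : S) :
    ∃ c : ℝ, Tendsto (fun T : ℕ => (∑ t ∈ range T, (M ^ t) s s') / (T : ℝ))
      atTop (𝓝 c) := by
  classical
  -- powers of M are stochastic
  have hpow : ∀ t : ℕ, (∀ i j, 0 ≤ (M ^ t) i j) ∧ (∀ i, ∑ j, (M ^ t) i j = 1) := by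
    intro t
    induction t with
    | zero =>
      constructor
      · intro i j
        simp only [pow_zero, Matrix.one_apply]
        positivity
      · intro i
        simp [Matrix.one_apply]
    | succ t ih =>
      have hmul : ∀ i j, (M ^ (t + 1)) i j = ∑ k, (M ^ t) i k * M k j := by
        intro i j
        rw [pow_succ, Matrix.mul_apply]
      constructor
      · intro i j
        rw [hmul]
        exact Finset.sum_nonneg fun k _ => mul_nonneg (ih.1 i k) (hnn k j)
      · intro i
        simp only [hmul]
        rw [Finset.sum_comm]
        have : ∀ k, ∑ j, (M ^ t) i k * M k j = (M ^ t) i k := by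
          intro k
          rw [← Finset.mul_sum, hrow k, mul_one]
        rw [Finset.sum_congr rfl fun k _ => this k, ih.2 i]
  have hle1 : ∀ t : ℕ, ∀ i j, (M ^ t) i j ≤ 1 := by
    intro t i j
    calc (M ^ t) i j ≤ ∑ j', (M ^ t) i j' :=
          Finset.single_le_sum (fun k _ => (hpow t).1 i k) (Finset.mem_univ j)
    _ = 1 := (hpow t).2 i
  -- Cesàro averages
  set A : ℕ → Matrix S S ℝ := fun T => (T : ℝ)⁻¹ • ∑ t ∈ range T, M ^ t with hAdef
  have hA : ∀ T i j, A T i j = (T : ℝ)⁻¹ * ∑ t ∈ range T, (M ^ t) i j := by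
    intro T i j
    simp [hAdef, Matrix.sum_apply]
  have hA0 : ∀ T i j, 0 ≤ A T i j := by
    intro T i j
    rw [hA]
    exact mul_nonneg (by positivity) (Finset.sum_nonneg fun t _ => (hpow t).1 i j)
  have hA1 : ∀ T i j, A T i j ≤ 1 := by
    intro T i j
    rw [hA]
    rcases Nat.eq_zero_or_pos T with hT | hT
    · simp [hT]
    · have hTpos : (0 : ℝ) < T := by exact_mod_cast hT
      have hsum : ∑ t ∈ range T, (M ^ t) i j ≤ (T : ℝ) := by
        calc ∑ t ∈ range T, (M ^ t) i j ≤ ∑ t ∈ range T, (1 : ℝ) :=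
              Finset.sum_le_sum fun t _ => hle1 t i j
        _ = (T : ℝ) := by simp
      calc (T : ℝ)⁻¹ * ∑ t ∈ range T, (M ^ t) i j ≤ (T : ℝ)⁻¹ * T := by
            exact mul_le_mul_of_nonneg_left hsum (by positivity)
      _ = 1 := inv_mul_cancel₀ (ne_of_gt hTpos)
  -- key computation: row/column averaging identity
  have hshift : ∀ (T : ℕ) i j, ∑ t ∈ range T, (M ^ (t + 1)) i j
      = ∑ t ∈ range T, (M ^ t) i j + (M ^ T) i j - (1 : Matrix S S ℝ) i j := by
    intro T i j
    have h1 : ∑ t ∈ range (T + 1), (M ^ t) i j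
        = ∑ t ∈ range T, (M ^ (t + 1)) i j + (M ^ 0) i j := by
      have := Finset.sum_range_succ' (fun t => (M ^ t) i j) T
      simpa using this
    have h2 : ∑ t ∈ range (T + 1), (M ^ t) i j
        = ∑ t ∈ range T, (M ^ t) i j + (M ^ T) i j := Finset.sum_range_succ _ T
    have h0 : (M ^ 0) i j = (1 : Matrix S S ℝ) i j := by rw [pow_zero]
    rw [h0] at h1
    linarith [h1, h2]
  -- any subsequential limit L satisfies L * M = L and M * L = L
  have hcast : Tendsto (fun T : ℕ => (T : ℝ)⁻¹) atTop (𝓝 0) :=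
    tendsto_inv_atTop_zero.comp tendsto_natCast_atTop_atTop
  have herr : ∀ (ψ : ℕ → ℕ), Tendsto ψ atTop atTop → ∀ i j,
      Tendsto (fun n => ((ψ n : ℝ))⁻¹ * ((M ^ (ψ n)) i j - (1 : Matrix S S ℝ) i j))
        atTop (𝓝 0) := by
    intro ψ hψ i j
    have hψc : Tendsto (fun n => ((ψ n : ℝ))⁻¹ * 2) atTop (𝓝 0) := by
      have := (hcast.comp hψ).mul_const (2 : ℝ)
      simpa using this
    refine squeeze_zero_norm (fun n => ?_) hψc
    have hb : |(M ^ (ψ n)) i j - (1 : Matrix S S ℝ) i j| ≤ 2 := by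
      have h1 : 0 ≤ (M ^ (ψ n)) i j := (hpow (ψ n)).1 i j
      have h2 : (M ^ (ψ n)) i j ≤ 1 := hle1 (ψ n) i j
      have h3 : 0 ≤ (1 : Matrix S S ℝ) i j := by
        simp only [Matrix.one_apply]; positivity
      have h4 : (1 : Matrix S S ℝ) i j ≤ 1 := by
        simp only [Matrix.one_apply]
        split <;> norm_num
      rw [abs_le]; constructor <;> linarith
    have : ‖((ψ n : ℝ))⁻¹ * ((M ^ (ψ n)) i j - (1 : Matrix S S ℝ) i j)‖
        = ((ψ n : ℝ))⁻¹ * |(M ^ (ψ n)) i j - (1 : Matrix S S ℝ) i j| := by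
      rw [norm_mul, Real.norm_eq_abs, Real.norm_eq_abs, abs_of_nonneg (by positivity)]
    rw [this]
    exact mul_le_mul_of_nonneg_left hb (by positivity)
  have hfix : ∀ (ψ : ℕ → ℕ), Tendsto ψ atTop atTop → ∀ L : Matrix S S ℝ,
      (∀ i j, Tendsto (fun n => A (ψ n) i j) atTop (𝓝 (L i j))) →
      L * M = L ∧ M * L = L := by
    intro ψ hψ L hL
    have hAM : ∀ T i j, ∑ k, A T i k * M k j
        = A T i j + (T : ℝ)⁻¹ * ((M ^ T) i j - (1 : Matrix S S ℝ) i j) := by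
      intro T i j
      have : ∑ k, A T i k * M k j
          = (T : ℝ)⁻¹ * ∑ t ∈ range T, (M ^ (t + 1)) i j := by
        have hk : ∀ k, A T i k * M k j
            = (T : ℝ)⁻¹ * ∑ t ∈ range T, (M ^ t) i k * M k j := by
          intro k
          rw [hA, mul_assoc, Finset.sum_mul]
        simp only [hk]
        rw [← Finset.mul_sum, Finset.sum_comm]
        refine congrArg _ (Finset.sum_congr rfl fun t _ => ?_)
        rw [pow_succ, Matrix.mul_apply]
      rw [this, hshift, hA]
      ring
    have hMA : ∀ T i j, ∑ k, M i k * A T k j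
        = A T i j + (T : ℝ)⁻¹ * ((M ^ T) i j - (1 : Matrix S S ℝ) i j) := by
      intro T i j
      have : ∑ k, M i k * A T k j
          = (T : ℝ)⁻¹ * ∑ t ∈ range T, (M ^ (t + 1)) i j := by
        have hk : ∀ k, M i k * A T k j
            = (T : ℝ)⁻¹ * ∑ t ∈ range T, M i k * (M ^ t) k j := by
          intro k
          rw [hA, mul_left_comm, Finset.mul_sum]
        simp only [hk]
        rw [← Finset.mul_sum, Finset.sum_comm]
        congr 1
        refine Finset.sum_congr rfl fun t _ => ?_
        rw [pow_succ', Matrix.mul_apply]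
      rw [this, hshift, hA]
      ring
    constructor
    · ext i j
      rw [Matrix.mul_apply]
      have h1 : Tendsto (fun n => ∑ k, A (ψ n) i k * M k j) atTop
          (𝓝 (∑ k, L i k * M k j)) :=
        tendsto_finset_sum _ fun k _ => (hL i k).mul tendsto_const_nhds
      have h2 : Tendsto (fun n => ∑ k, A (ψ n) i k * M k j) atTop (𝓝 (L i j)) := by
        have := (hL i j).add (herr ψ hψ i j)
        rw [add_zero] at this
        refine this.congr fun n => (hAM (ψ n) i j).symm
      exact tendsto_nhds_unique h1 h2
    · ext i j
      rw [Matrix.mul_apply]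
      have h1 : Tendsto (fun n => ∑ k, M i k * A (ψ n) k j) atTop
          (𝓝 (∑ k, M i k * L k j)) :=
        tendsto_finset_sum _ fun k _ => tendsto_const_nhds.mul (hL k j)
      have h2 : Tendsto (fun n => ∑ k, M i k * A (ψ n) k j) atTop (𝓝 (L i j)) := by
        have := (hL i j).add (herr ψ hψ i j)
        rw [add_zero] at this
        refine this.congr fun n => (hMA (ψ n) i j).symm
      exact tendsto_nhds_unique h1 h2
  -- invariant matrices absorb Cesàro averages
  have habsorbL : ∀ L : Matrix S S ℝ, L * M = L → ∀ T : ℕ, 1 ≤ T → L * A T = L := by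
    intro L hLM T hT
    have hpowL : ∀ t : ℕ, L * M ^ t = L := by
      intro t
      induction t with
      | zero => simp
      | succ t ih => rw [pow_succ, ← Matrix.mul_assoc, ih, hLM]
    have : L * A T = (T : ℝ)⁻¹ • ∑ t ∈ range T, L * M ^ t := by
      rw [hAdef]
      rw [Matrix.mul_smul, Finset.mul_sum]
    rw [this]
    simp only [hpowL]
    rw [Finset.sum_const, Finset.card_range, ← Nat.cast_smul_eq_nsmul ℝ, smul_smul,
      inv_mul_cancel₀, one_smul]
    exact Nat.cast_ne_zero.mpr (Nat.one_le_iff_ne_zero.mp hT)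
  have habsorbR : ∀ L : Matrix S S ℝ, M * L = L → ∀ T : ℕ, 1 ≤ T → A T * L = L := by
    intro L hML T hT
    have hpowL : ∀ t : ℕ, M ^ t * L = L := by
      intro t
      induction t with
      | zero => simp
      | succ t ih => rw [pow_succ, Matrix.mul_assoc, hML, ih]
    have : A T * L = (T : ℝ)⁻¹ • ∑ t ∈ range T, M ^ t * L := by
      rw [hAdef, Matrix.smul_mul, Finset.sum_mul]
    rw [this]
    simp only [hpowL]
    rw [Finset.sum_const, Finset.card_range, ← Nat.cast_smul_eq_nsmul ℝ, smul_smul,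
      inv_mul_cancel₀, one_smul]
    exact Nat.cast_ne_zero.mpr (Nat.one_le_iff_ne_zero.mp hT)
  -- the sequence of averages, in the function space
  set f : ℕ → (S → S → ℝ) := fun T i j => A T i j with hfdef
  set K : Set (S → S → ℝ) :=
    Set.univ.pi fun _ : S => Set.univ.pi fun _ : S => Set.Icc (0 : ℝ) 1 with hKdef
  have hKc : IsCompact K :=
    isCompact_univ_pi fun _ => isCompact_univ_pi fun _ => isCompact_Icc
  have hfK : ∀ T, f T ∈ K := by
    intro T
    rw [hKdef]
    intro i _
    intro j _
    exact ⟨hA0 T i j, hA1 T i j⟩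
  obtain ⟨L0x, _, φ, hφmono, hφlim⟩ := hKc.tendsto_subseq hfK
  have hφ : Tendsto φ atTop atTop := hφmono.tendsto_atTop
  -- subsequential limits as matrices, entrywise convergence
  have hent : ∀ (g : ℕ → ℕ) (Lx : S → S → ℝ), Tendsto (f ∘ g) atTop (𝓝 Lx) →
      ∀ i j, Tendsto (fun n => A (g n) i j) atTop (𝓝 (Lx i j)) := by
    intro g Lx hg i j
    have h1 := tendsto_pi_nhds.1 hg i
    exact tendsto_pi_nhds.1 h1 j
  set L0 : Matrix S S ℝ := Matrix.of L0x with hL0def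
  have hL0ent : ∀ i j, Tendsto (fun n => A (φ n) i j) atTop (𝓝 (L0 i j)) :=
    hent φ L0x hφlim
  obtain ⟨hL0M, hML0⟩ := hfix φ hφ L0 hL0ent
  -- uniqueness of subsequential limits
  have huniq : ∀ (ψ : ℕ → ℕ), Tendsto ψ atTop atTop → ∀ L1 : Matrix S S ℝ,
      (∀ i j, Tendsto (fun n => A (ψ n) i j) atTop (𝓝 (L1 i j))) → L1 = L0 := by
    intro ψ hψ L1 hL1
    obtain ⟨hL1M, hML1⟩ := hfix ψ hψ L1 hL1
    have hev : ∀ᶠ n in atTop, 1 ≤ ψ n := hψ.eventually_ge_atTop 1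
    have hev' : ∀ᶠ n in atTop, 1 ≤ φ n := hφ.eventually_ge_atTop 1
    -- L0 * L1 = L0  (from L0 * A(ψ n) = L0 eventually, and A(ψ n) → L1)
    have e1 : L0 * L1 = L0 := by
      ext i j
      have hconst : ∀ᶠ n in atTop, ∑ k, L0 i k * A (ψ n) k j = L0 i j := by
        filter_upwards [hev] with n hn
        have := habsorbL L0 hL0M (ψ n) hn
        calc ∑ k, L0 i k * A (ψ n) k j = (L0 * A (ψ n)) i j := (Matrix.mul_apply).symm
        _ = L0 i j := by rw [this]
      have hlim : Tendsto (fun n => ∑ k, L0 i k * A (ψ n) k j) atTop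
          (𝓝 (∑ k, L0 i k * L1 k j)) :=
        tendsto_finset_sum _ fun k _ => tendsto_const_nhds.mul (hL1 k j)
      have hlim' : Tendsto (fun n => ∑ k, L0 i k * A (ψ n) k j) atTop (𝓝 (L0 i j)) :=
        Tendsto.congr' (by filter_upwards [hconst] with n hn using hn.symm)
          tendsto_const_nhds
      have := tendsto_nhds_unique hlim hlim'
      rw [Matrix.mul_apply]
      exact this
    -- L0 * L1 = L1  (from A(φ n) * L1 = L1 eventually, and A(φ n) → L0)
    have e2 : L0 * L1 = L1 := by
      ext i j
      have hconst : ∀ᶠ n in atTop, ∑ k, A (φ n) i k * L1 k j = L1 i j := by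
        filter_upwards [hev'] with n hn
        have := habsorbR L1 hML1 (φ n) hn
        calc ∑ k, A (φ n) i k * L1 k j = (A (φ n) * L1) i j := (Matrix.mul_apply).symm
        _ = L1 i j := by rw [this]
      have hlim : Tendsto (fun n => ∑ k, A (φ n) i k * L1 k j) atTop
          (𝓝 (∑ k, L0 i k * L1 k j)) :=
        tendsto_finset_sum _ fun k _ => (hL0ent i k).mul tendsto_const_nhds
      have hlim' : Tendsto (fun n => ∑ k, A (φ n) i k * L1 k j) atTop (𝓝 (L1 i j)) :=
        Tendsto.congr' (by filter_upwards [hconst] with n hn using hn.symm)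
          tendsto_const_nhds
      have := tendsto_nhds_unique hlim hlim'
      rw [Matrix.mul_apply]
      exact this
    rw [← e1, e2]
  -- the full sequence converges to L0x
  have hfull : Tendsto f atTop (𝓝 L0x) := by
    apply tendsto_of_subseq_tendsto
    intro ns hns
    obtain ⟨L1x, _, ms, hmsmono, hmslim⟩ := hKc.tendsto_subseq (fun n => hfK (ns n))
    refine ⟨ms, ?_⟩
    have hψ : Tendsto (fun n => ns (ms n)) atTop atTop := hns.comp hmsmono.tendsto_atTop
    have hL1ent : ∀ i j, Tendsto (fun n => A (ns (ms n)) i j) atTop (𝓝 (L1x i j)) := by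
      intro i j
      exact hent (fun n => ns (ms n)) L1x hmslim i j
    have : (Matrix.of L1x : Matrix S S ℝ) = L0 := huniq _ hψ (Matrix.of L1x) hL1ent
    have hL1L0 : L1x = L0x := by
      funext i j
      exact congrFun (congrFun this i) j
    rw [← hL1L0]
    exact hmslim
  refine ⟨L0x s s', ?_⟩
  have hgoal : Tendsto (fun T => A T s s') atTop (𝓝 (L0x s s')) := by
    have h1 := tendsto_pi_nhds.1 hfull s
    exact tendsto_pi_nhds.1 h1 s'
  refine hgoal.congr fun T => ?_
  rw [hA, div_eq_inv_mul]
end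
end

section
/- Lemma (uniqueness of the bootstrapped-return representation up to positive affine transformation): Let r, r' : S × A → ℝ and V, V' : S → ℝ be such that the bootstrapped returns induce the same order on partial trajectories, i.e., for all partial trajectories h, h': B(r,V)(h) ≥ B(r,V)(h') if and only if B(r',V')(h) ≥ B(r',V')(h'). Then there exist α > 0 and β ∈ ℝ such that r'(s,a) = α · r(s,a) + β for all s ∈ S and a ∈ A. -/
open Finset

noncomputable section

variable {S A : Type} [Fintype S] [Fintype A] [Nonempty S] [Nonempty A]

/-- The bootstrapped return of a partial trajectory `h = (pairs, z)`. -/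
def Breturn (r : S × A → ℝ) (V : S → ℝ) (h : List (S × A) × S) : ℝ :=
  (h.1.map r).sum + V h.2

private lemma rat_le_ext' {t t' : ℝ} (h : ∀ q : ℚ, (q : ℝ) ≤ t ↔ (q : ℝ) ≤ t') : t = t' := by
  by_contra hne
  rcases lt_or_gt_of_ne hne with hlt | hlt
  · obtain ⟨q, hq1, hq2⟩ := exists_rat_btwn hlt
    exact absurd ((h q).2 hq2.le) (not_le.2 hq1)
  · obtain ⟨q, hq1, hq2⟩ := exists_rat_btwn hlt
    exact absurd ((h q).1 hq2.le) (not_le.2 hq1)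

/-- **Uniqueness of the bootstrapped-return representation up to positive affine
transformation.** If `(r,V)` and `(r',V')` induce the same order on partial trajectories
via bootstrapped returns, then `r' = α·r + β` for some `α > 0` and `β ∈ ℝ`. -/
theorem bootstrapped_return_unique_up_to_affine
    (r r' : S × A → ℝ) (V V' : S → ℝ)
    (hord : ∀ h h' : List (S × A) × S,
      Breturn r V h' ≤ Breturn r V h ↔ Breturn r' V' h' ≤ Breturn r' V' h) :
    ∃ α : ℝ, 0 < α ∧ ∃ β : ℝ, ∀ s a, r' (s, a) = α * r (s, a) + β := by
  obtain ⟨z₀⟩ := ‹Nonempty S›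
  have hsum : ∀ L L' : List (S × A),
      (L'.map r).sum ≤ (L.map r).sum ↔ (L'.map r').sum ≤ (L.map r').sum := by
    intro L L'
    have h := hord (L, z₀) (L', z₀)
    simp only [Breturn] at h
    constructor
    · intro hle
      have := h.1 (by linarith)
      linarith
    · intro hle
      have := h.2 (by linarith)
      linarith
  have hsingle : ∀ x y : S × A, r x ≤ r y ↔ r' x ≤ r' y := by
    intro x y
    simpa using hsum [y] [x]
  have hkey : ∀ x a b : S × A, ∀ n p₁ p₂ : ℕ,
      ((n : ℝ) * r a + p₁ * r b + p₂ * r a ≤ n * r x + p₂ * r b + p₁ * r a ↔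
       (n : ℝ) * r' a + p₁ * r' b + p₂ * r' a ≤ n * r' x + p₂ * r' b + p₁ * r' a) := by
    intro x a b n p₁ p₂
    have h := hsum (List.replicate n x ++ List.replicate p₂ b ++ List.replicate p₁ a)
                   (List.replicate n a ++ List.replicate p₁ b ++ List.replicate p₂ a)
    simp only [List.map_append, List.sum_append, List.map_replicate, List.sum_replicate,
      nsmul_eq_mul] at h
    constructor
    · intro hle
      have := h.1 (by linarith)
      linarith
    · intro hle
      have := h.2 (by linarith)
      linarith
  by_cases hconst : ∀ x y : S × A, r x = r y
  · refine ⟨1, one_pos, r' (Classical.arbitrary (S × A)) - r (Classical.arbitrary (S × A)), ?_⟩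
    intro s a
    set c := Classical.arbitrary (S × A)
    have h1 : r' (s, a) = r' c :=
      le_antisymm ((hsingle _ _).1 (hconst _ _).le) ((hsingle _ _).1 (hconst _ _).le)
    have h2 : r (s, a) = r c := hconst _ _
    rw [h1, h2]; ring
  · push_neg at hconst
    obtain ⟨a₀, b₀, hne⟩ := hconst
    have hex : ∃ a b : S × A, r a < r b := by
      rcases hne.lt_or_gt with h | h
      · exact ⟨a₀, b₀, h⟩
      · exact ⟨b₀, a₀, h⟩
    obtain ⟨a, b, hab⟩ := hex
    have hab' : r' a < r' b := by
      refine lt_of_le_of_ne ((hsingle a b).1 hab.le) fun he => ?_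
      exact absurd ((hsingle b a).2 he.ge) (not_le.2 hab)
    have hc : (0 : ℝ) < r b - r a := by linarith
    have hc' : (0 : ℝ) < r' b - r' a := by linarith
    refine ⟨(r' b - r' a) / (r b - r a), div_pos hc' hc,
      r' a - (r' b - r' a) / (r b - r a) * r a, ?_⟩
    intro s aa
    set x : S × A := (s, aa) with hx
    have main : (r x - r a) / (r b - r a) = (r' x - r' a) / (r' b - r' a) := by
      apply rat_le_ext'
      intro q
      have hdpos : (0 : ℝ) < (q.den : ℝ) := by exact_mod_cast q.pos
      have hcast : ((q.num.toNat : ℝ)) - (((-q.num).toNat : ℝ)) = (q.num : ℝ) := by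
        have := Int.toNat_sub_toNat_neg q.num
        exact_mod_cast this
      have hk := hkey x a b q.den q.num.toNat (-q.num).toNat
      have e1 : (q : ℝ) ≤ (r x - r a) / (r b - r a) ↔
          (q.num : ℝ) * (r b - r a) ≤ (q.den : ℝ) * (r x - r a) := by
        rw [Rat.cast_def, div_le_div_iff₀ hdpos hc, mul_comm (r x - r a)]
      have e2 : (q : ℝ) ≤ (r' x - r' a) / (r' b - r' a) ↔
          (q.num : ℝ) * (r' b - r' a) ≤ (q.den : ℝ) * (r' x - r' a) := by
        rw [Rat.cast_def, div_le_div_iff₀ hdpos hc', mul_comm (r' x - r' a)]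
      rw [e1, e2]
      constructor
      · intro hle
        have h1 : ((q.num.toNat : ℝ) - ((-q.num).toNat : ℝ)) * (r b - r a) ≤
            (q.den : ℝ) * (r x - r a) := by rw [hcast]; exact hle
        have h2 := hk.1 (by linarith [h1])
        have h3 : ((q.num.toNat : ℝ) - ((-q.num).toNat : ℝ)) * (r' b - r' a) ≤
            (q.den : ℝ) * (r' x - r' a) := by linarith [h2]
        rw [hcast] at h3
        exact h3
      · intro hle
        have h1 : ((q.num.toNat : ℝ) - ((-q.num).toNat : ℝ)) * (r' b - r' a) ≤
            (q.den : ℝ) * (r' x - r' a) := by rw [hcast]; exact hle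
        have h2 := hk.2 (by linarith [h1])
        have h3 : ((q.num.toNat : ℝ) - ((-q.num).toNat : ℝ)) * (r b - r a) ≤
            (q.den : ℝ) * (r x - r a) := by linarith [h2]
        rw [hcast] at h3
        exact h3
    have hmain' : (r x - r a) * (r' b - r' a) = (r' x - r' a) * (r b - r a) := by
      field_simp at main
      linarith [main]
    have : r' x - r' a = (r' b - r' a) / (r b - r a) * (r x - r a) := by
      field_simp
      linarith [hmain']
    have hxr : r' x = (r' b - r' a) / (r b - r a) * r x + (r' a - (r' b - r' a) / (r b - r a) * r a) := by
      linarith [this, mul_sub ((r' b - r' a) / (r b - r a)) (r x) (r a)]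
    exact hxr
end
end

section
/- Abel–Cesàro identity for discounted values (the scaled discounted value converges to the average reward): Let (π,P) be unichain and let r : S × A → ℝ. Then for every s ∈ S, lim_{γ→1⁻} (1 − γ) · V(π,P,r,γ)(s) = r̄(π,P,r), the average reward of (π,P,r). -/
open Filter Finset Topology

noncomputable section

variable {S A : Type} [Fintype S] [DecidableEq S] [Fintype A] [Nonempty S] [Nonempty A]

/-- `(π, P)` is unichain with limiting distribution `μ`: for every `s'`, the Cesàro
averages of `(M(π,P)^t)(s,s')` converge to `μ s'`, independently of `s`. -/
def Unichain (π : S → A → ℝ) (P : A → S → S → ℝ) (μ : S → ℝ) : Prop :=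
  ∀ s s', Tendsto (fun T : ℕ => (∑ t ∈ range T, (Mmat π P ^ t) s s') / (T : ℝ))
    atTop (𝓝 (μ s'))

/-! Write `a t = (M^t rπ)(s)` and `c t` for the Cesàro mean of `a 0, …, a t`. Summation by parts
turns `(1 - γ) ∑ γ^t a t` into `∑ (1 - γ)^2 (t + 1) γ^t · c t`. These weights form a probability
distribution on `ℕ` whose mass escapes to infinity as `γ → 1⁻`, so the weighted average of the
`c t` tends to their limit, which by the unichain property is `∑ μ rπ`. -/

theorem Summable.mul_of_tendsto {w c : ℕ → ℝ} {L : ℝ} (hw : Summable w)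
    (hc : Tendsto c atTop (𝓝 L)) : Summable fun t => w t * c t := by
  obtain ⟨C, hC⟩ := (Metric.isBounded_range_of_tendsto c hc).exists_norm_le
  refine .of_norm_bounded (hw.norm.mul_right C) fun t => ?_
  rw [norm_mul]
  exact mul_le_mul_of_nonneg_left (hC _ ⟨t, rfl⟩) (norm_nonneg _)

theorem tendsto_tsum_mul_of_tendsto {ι : Type*} {l : Filter ι} {w : ι → ℕ → ℝ} {c : ℕ → ℝ}
    {L : ℝ} (hw_nonneg : ∀ᶠ i in l, ∀ t, 0 ≤ w i t) (hw_sum : ∀ᶠ i in l, HasSum (w i) 1)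
    (hw_zero : ∀ t, Tendsto (fun i => w i t) l (𝓝 0)) (hc : Tendsto c atTop (𝓝 L)) :
    Tendsto (fun i => ∑' t, w i t * c t) l (𝓝 L) := by
  rw [Metric.tendsto_nhds]
  intro ε hε
  obtain ⟨N, hN⟩ := Metric.tendsto_atTop.1 hc (ε / 2) (half_pos hε)
  have hhead : Tendsto (fun i => ∑ t ∈ range N, w i t * |c t - L|) l (𝓝 0) := by
    simpa using tendsto_finsetSum (range N) fun t _ => (hw_zero t).mul_const |c t - L|
  filter_upwards [hw_nonneg, hw_sum, hhead.eventually (gt_mem_nhds (half_pos hε))]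
    with i hpos hone hsmall
  have hdev : HasSum (fun t => w i t * (c t - L)) (∑' t, w i t * c t - L) := by
    simpa [mul_sub] using (hone.summable.mul_of_tendsto hc).hasSum.sub (hone.mul_right L)
  have hhead_sum : HasSum (fun t => if t < N then w i t * |c t - L| else 0)
      (∑ t ∈ range N, w i t * |c t - L|) := by
    have : HasSum (fun t => if t < N then w i t * |c t - L| else 0)
        (∑ t ∈ range N, if t < N then w i t * |c t - L| else 0) :=
      hasSum_sum_of_ne_finset_zero fun t ht => if_neg (mem_range.not.1 ht)
    rwa [sum_congr rfl fun t ht => if_pos (mem_range.1 ht)] at this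
  -- Below `N` the deviation is charged to the vanishing head, from `N` on to `ε / 2`.
  have hbound : ∀ t, ‖w i t * (c t - L)‖
      ≤ (if t < N then w i t * |c t - L| else 0) + w i t * (ε / 2) := by
    intro t
    rw [Real.norm_eq_abs, abs_mul, abs_of_nonneg (hpos t)]
    split_ifs with ht
    · nlinarith [hpos t]
    · rw [zero_add]
      exact mul_le_mul_of_nonneg_left (hN t (not_lt.1 ht)).le (hpos t)
  have := hdev.norm_le_of_bounded (hhead_sum.add (by simpa using hone.mul_right (ε / 2))) hbound
  rw [Real.dist_eq, ← Real.norm_eq_abs]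
  linarith

theorem HasSum.pow_mul_of_pow_mul_sum_range {R : Type*} [CommRing R] [TopologicalSpace R]
    [IsTopologicalRing R] {a : ℕ → R} {γ X : R}
    (h : HasSum (fun t => γ ^ t * ∑ i ∈ range (t + 1), a i) X) :
    HasSum (fun t => γ ^ t * a t) ((1 - γ) * X) := by
  have hshift : HasSum (fun t => γ ^ t * ∑ i ∈ range t, a i) (γ * X) := by
    rw [← hasSum_nat_add_iff' 1]
    simpa [pow_succ, mul_assoc, mul_left_comm] using h.mul_left γ
  have hdiff : (fun t => γ ^ t * a t)
      = fun t => γ ^ t * ∑ i ∈ range (t + 1), a i - γ ^ t * ∑ i ∈ range t, a i := by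
    funext t
    rw [sum_range_succ]
    ring
  rw [hdiff, sub_mul, one_mul]
  exact h.sub hshift

theorem hasSum_one_sub_sq_mul_succ_mul_pow {γ : ℝ} (hγ : ‖γ‖ < 1) :
    HasSum (fun t : ℕ => (1 - γ) ^ 2 * ((t + 1) * γ ^ t)) 1 := by
  have h1 : (1 - γ) ^ 2 ≠ 0 := pow_ne_zero _ (sub_ne_zero.2 (by rintro rfl; simp at hγ))
  have := (hasSum_choose_mul_geometric_of_norm_lt_one 1 hγ).mul_left ((1 - γ) ^ 2)
  rw [mul_one_div_cancel h1] at this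
  exact this.congr_fun fun t => by rw [Nat.choose_one_right]; push_cast; ring

theorem tendsto_one_sub_mul_tsum_pow_mul_of_cesaro {a : ℕ → ℝ} {L : ℝ}
    (h : Tendsto (fun n : ℕ => (∑ t ∈ range n, a t) / n) atTop (𝓝 L)) :
    Tendsto (fun γ : ℝ => (1 - γ) * ∑' t, γ ^ t * a t) (𝓝[<] 1) (𝓝 L) := by
  set c : ℕ → ℝ := fun t => (∑ i ∈ range (t + 1), a i) / (t + 1)
  have hc : Tendsto c atTop (𝓝 L) := by simpa [c] using (tendsto_add_atTop_iff_nat 1).2 h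
  set w : ℝ → ℕ → ℝ := fun γ t => (1 - γ) ^ 2 * ((t + 1) * γ ^ t)
  have hγ : ∀ᶠ γ in 𝓝[<] (1 : ℝ), γ ∈ Set.Ioo 0 1 := Ioo_mem_nhdsLT one_pos
  have hw_sum : ∀ γ ∈ Set.Ioo (0 : ℝ) 1, HasSum (w γ) 1 := fun γ hγ =>
    hasSum_one_sub_sq_mul_succ_mul_pow (by rw [Real.norm_eq_abs, abs_of_pos hγ.1]; exact hγ.2)
  have hw_zero : ∀ t, Tendsto (fun γ => w γ t) (𝓝[<] 1) (𝓝 0) := fun t =>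
    tendsto_nhdsWithin_of_tendsto_nhds <|
      (by fun_prop : Continuous fun γ : ℝ => w γ t).tendsto' 1 0 (by simp [w])
  refine (tendsto_tsum_mul_of_tendsto (hγ.mono fun γ hγ t => by positivity [hγ.1])
    (hγ.mono hw_sum) hw_zero hc).congr' ?_
  filter_upwards [hγ] with γ hγ
  have h1 : 1 - γ ≠ 0 := sub_ne_zero.2 hγ.2.ne'
  have hX : HasSum (fun t => γ ^ t * ∑ i ∈ range (t + 1), a i)
      (((1 - γ) ^ 2)⁻¹ * ∑' t, w γ t * c t) := by
    refine (((hw_sum γ hγ).summable.mul_of_tendsto hc).hasSum.mul_left _).congr_fun fun t => ?_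
    have : (t : ℝ) + 1 ≠ 0 := by positivity
    simp only [w, c]
    field_simp
  rw [hX.pow_mul_of_pow_mul_sum_range.tsum_eq]
  field_simp

theorem scaled_discounted_value_tendsto_average_reward_general
    (π : S → A → ℝ) (P : A → S → S → ℝ)
    (μ : S → ℝ) (huni : Unichain π P μ)
    (r : S × A → ℝ) (s : S) :
    Tendsto (fun γ : ℝ => (1 - γ) * Vval π P r γ s) (𝓝[<] (1 : ℝ))
      (𝓝 (∑ s', μ s' * rpi π r s')) := by
  refine tendsto_one_sub_mul_tsum_pow_mul_of_cesaro ?_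
  have hcesaro : ∀ T : ℕ, (∑ t ∈ range T, (Mmat π P ^ t).mulVec (rpi π r) s) / T
      = ∑ s', (∑ t ∈ range T, (Mmat π P ^ t) s s') / T * rpi π r s' := by
    intro T
    simp only [Matrix.mulVec, dotProduct, sum_div, sum_mul]
    rw [sum_comm]
    simp only [mul_div_right_comm]
  simpa only [hcesaro] using
    tendsto_finsetSum _ fun s' _ => (huni s s').mul_const (rpi π r s')

/-- **Abel–Cesàro identity for discounted values.** For a unichain pair `(π,P)` and any
reward `r`, for every state `s`, `lim_{γ→1⁻} (1 − γ)·V(π,P,r,γ)(s) = r̄(π,P,r)`,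
the average reward. -/
theorem scaled_discounted_value_tendsto_average_reward
    (π : S → A → ℝ) (P : A → S → S → ℝ)
    (hπ : IsPolicy π) (hP : IsTransition P)
    (μ : S → ℝ) (huni : Unichain π P μ)
    (r : S × A → ℝ) (s : S) :
    Tendsto (fun γ : ℝ => (1 - γ) * Vval π P r γ s) (𝓝[<] (1 : ℝ))
      (𝓝 (∑ s', μ s' * rpi π r s')) :=
  scaled_discounted_value_tendsto_average_reward_general π P μ huni r s
end
end
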